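/- For all t ∈ (0,1), the function φ(t) = ((log(1+t) - log(1-t))/(2t))·((1+t)log(1+t) + (1-t)log(1-t)) + log(1+t) + log(1-t) satisfies φ(t) ≤ 0. -/

import Mathlib

/-!
With `A = log (1 + t) - log (1 - t)` and `S = log (1 + t) + log (1 - t) = log (1 - t²)` one has
`(1 + t) log (1 + t) + (1 - t) log (1 - t) = t A + S`, so `2 t φ(t) = t A² + S (A + 2 t)`.
Since `A' = 2 / (1 - t²)` and `S' = -2 t / (1 - t²)`, three differentiations, each of a function
vanishing at `0`, reduce this to `S - t A ≤ -3 t²`, which follows from `A ≥ 2 t` (the power series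
of `A` has nonnegative coefficients) and `log (1 - t²) ≤ -t²`.
-/

open Real Set

theorem antitoneOn_Ico_of_hasDerivAt_nonpos {f f' : ℝ → ℝ} {a b : ℝ}
    (hf : ∀ x ∈ Ico a b, HasDerivAt f (f' x) x) (hf' : ∀ x ∈ Ioo a b, f' x ≤ 0) :
    AntitoneOn f (Ico a b) :=
  antitoneOn_of_hasDerivWithinAt_nonpos (convex_Ico a b)
    (fun x hx => (hf x hx).continuousAt.continuousWithinAt)
    (fun x hx => (hf x (interior_subset hx)).hasDerivWithinAt)
    (fun x hx => hf' x (by rwa [interior_Ico] at hx))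

noncomputable def logQuot (t : ℝ) : ℝ := log (1 + t) - log (1 - t)

noncomputable def logProd (t : ℝ) : ℝ := log (1 + t) + log (1 - t)

@[simp] theorem logQuot_zero : logQuot 0 = 0 := by simp [logQuot]

@[simp] theorem logProd_zero : logProd 0 = 0 := by simp [logProd]

theorem one_sub_sq_pos_of_mem_Ioo {x : ℝ} (hx : x ∈ Ioo (-1 : ℝ) 1) : 0 < 1 - x ^ 2 := by
  nlinarith [hx.1, hx.2]

theorem hasDerivAt_logQuot {x : ℝ} (hx : x ∈ Ioo (-1 : ℝ) 1) :
    HasDerivAt logQuot (2 / (1 - x ^ 2)) x := by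
  have h₁ : 1 + x ≠ 0 := by linarith [hx.1]
  have h₂ : 1 - x ≠ 0 := by linarith [hx.2]
  have h := (((hasDerivAt_id' x).const_add 1).log h₁).sub (((hasDerivAt_id' x).const_sub 1).log h₂)
  refine h.congr_deriv ?_
  have h₃ := (one_sub_sq_pos_of_mem_Ioo hx).ne'
  field_simp
  ring

theorem hasDerivAt_logProd {x : ℝ} (hx : x ∈ Ioo (-1 : ℝ) 1) :
    HasDerivAt logProd (-2 * x / (1 - x ^ 2)) x := by
  have h₁ : 1 + x ≠ 0 := by linarith [hx.1]
  have h₂ : 1 - x ≠ 0 := by linarith [hx.2]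
  have h := (((hasDerivAt_id' x).const_add 1).log h₁).add (((hasDerivAt_id' x).const_sub 1).log h₂)
  refine h.congr_deriv ?_
  have h₃ := (one_sub_sq_pos_of_mem_Ioo hx).ne'
  field_simp
  ring

theorem two_mul_le_logQuot {t : ℝ} (ht₀ : 0 ≤ t) (ht₁ : t < 1) : 2 * t ≤ logQuot t := by
  have h := hasSum_log_sub_log_of_abs_lt_one (abs_lt.2 ⟨by linarith, ht₁⟩)
  simpa [logQuot] using le_hasSum h 0 fun j _ => by positivity

theorem logProd_le_neg_sq {t : ℝ} (ht : t ∈ Ioo (-1 : ℝ) 1) : logProd t ≤ -t ^ 2 := by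
  have h₁ : 0 < 1 + t := by linarith [ht.1]
  have h₂ : 0 < 1 - t := by linarith [ht.2]
  calc logProd t = log ((1 + t) * (1 - t)) := (log_mul h₁.ne' h₂.ne').symm
    _ ≤ (1 + t) * (1 - t) - 1 := log_le_sub_one_of_pos (mul_pos h₁ h₂)
    _ = -t ^ 2 := by ring

theorem logProd_sub_mul_logQuot_le {t : ℝ} (ht₀ : 0 ≤ t) (ht₁ : t < 1) :
    logProd t - t * logQuot t ≤ -3 * t ^ 2 := by
  have hS := logProd_le_neg_sq ⟨by linarith, ht₁⟩
  have hA := mul_le_mul_of_nonneg_left (two_mul_le_logQuot ht₀ ht₁) ht₀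
  linarith

theorem three_sub_sq_mul_logQuot_add_le {t : ℝ} (ht₀ : 0 ≤ t) (ht₁ : t < 1) :
    (3 - t ^ 2) * logQuot t + 2 * t * logProd t ≤ 6 * t - 2 * t ^ 3 := by
  have hderiv : ∀ x ∈ Ico (0 : ℝ) 1, HasDerivAt
      (fun t => (3 - t ^ 2) * logQuot t + 2 * t * logProd t - 6 * t + 2 * t ^ 3)
      (2 * (logProd x - x * logQuot x + 3 * x ^ 2)) x := by
    intro x hx
    have hx' : x ∈ Ioo (-1 : ℝ) 1 := ⟨by linarith [hx.1], hx.2⟩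
    have h₀ := (one_sub_sq_pos_of_mem_Ioo hx').ne'
    have h := (((((hasDerivAt_pow 2 x).const_sub 3).mul (hasDerivAt_logQuot hx')).add
      (((hasDerivAt_id' x).const_mul 2).mul (hasDerivAt_logProd hx'))).sub
      ((hasDerivAt_id' x).const_mul 6)).add ((hasDerivAt_pow 3 x).const_mul 2)
    refine h.congr_deriv ?_
    field_simp
    ring
  have h := antitoneOn_Ico_of_hasDerivAt_nonpos hderiv
    (fun x hx => by linarith [logProd_sub_mul_logQuot_le hx.1.le hx.2])
    ⟨le_rfl, one_pos⟩ ⟨ht₀, ht₁⟩ ht₀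
  simp only [logQuot_zero, logProd_zero] at h
  linarith

theorem one_sub_sq_mul_logQuot_sq_add_le {t : ℝ} (ht₀ : 0 ≤ t) (ht₁ : t < 1) :
    (1 - t ^ 2) * logQuot t ^ 2 + 2 * t * logQuot t + 2 * (2 - t ^ 2) * logProd t ≤ 4 * t ^ 2 := by
  -- Dividing by `1 - t²` makes the derivative a positive multiple of the previous expression.
  have hderiv : ∀ x ∈ Ico (0 : ℝ) 1, HasDerivAt
      (fun t => ((1 - t ^ 2) * logQuot t ^ 2 + 2 * t * logQuot t - 4 * t ^ 2 +
        2 * (2 - t ^ 2) * logProd t) / (1 - t ^ 2))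
      (2 * ((3 - x ^ 2) * logQuot x + 2 * x * logProd x - 6 * x + 2 * x ^ 3) / (1 - x ^ 2) ^ 2)
      x := by
    intro x hx
    have hx' : x ∈ Ioo (-1 : ℝ) 1 := ⟨by linarith [hx.1], hx.2⟩
    have h₀ := (one_sub_sq_pos_of_mem_Ioo hx').ne'
    have hq := (hasDerivAt_pow 2 x).const_sub 1
    have h := ((((hq.mul ((hasDerivAt_logQuot hx').pow 2)).add
      (((hasDerivAt_id' x).const_mul 2).mul (hasDerivAt_logQuot hx'))).sub
      ((hasDerivAt_pow 2 x).const_mul 4)).add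
      ((((hasDerivAt_pow 2 x).const_sub 2).const_mul 2).mul (hasDerivAt_logProd hx'))).div hq h₀
    refine h.congr_deriv ?_
    simp only [Pi.add_apply, Pi.sub_apply, Pi.mul_apply, Pi.pow_apply]
    field_simp
    ring
  have h := antitoneOn_Ico_of_hasDerivAt_nonpos hderiv
    (fun x hx => div_nonpos_of_nonpos_of_nonneg
      (by linarith [three_sub_sq_mul_logQuot_add_le hx.1.le hx.2]) (sq_nonneg _))
    ⟨le_rfl, one_pos⟩ ⟨ht₀, ht₁⟩ ht₀
  simp only [logQuot_zero, logProd_zero] at h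
  have := (div_le_iff₀ (one_sub_sq_pos_of_mem_Ioo ⟨by linarith, ht₁⟩)).1 (by simpa using h)
  linarith

theorem mul_logQuot_sq_add_logProd_mul_nonpos {t : ℝ} (ht₀ : 0 ≤ t) (ht₁ : t < 1) :
    t * logQuot t ^ 2 + logProd t * (logQuot t + 2 * t) ≤ 0 := by
  have hderiv : ∀ x ∈ Ico (0 : ℝ) 1, HasDerivAt
      (fun t => t * logQuot t ^ 2 + logProd t * (logQuot t + 2 * t))
      (((1 - x ^ 2) * logQuot x ^ 2 + 2 * x * logQuot x - 4 * x ^ 2 +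
        2 * (2 - x ^ 2) * logProd x) / (1 - x ^ 2)) x := by
    intro x hx
    have hx' : x ∈ Ioo (-1 : ℝ) 1 := ⟨by linarith [hx.1], hx.2⟩
    have h₀ := (one_sub_sq_pos_of_mem_Ioo hx').ne'
    have h := ((hasDerivAt_id' x).mul ((hasDerivAt_logQuot hx').pow 2)).add
      ((hasDerivAt_logProd hx').mul ((hasDerivAt_logQuot hx').add ((hasDerivAt_id' x).const_mul 2)))
    refine h.congr_deriv ?_
    simp only [Pi.add_apply, Pi.pow_apply]
    field_simp
    ring
  have h := antitoneOn_Ico_of_hasDerivAt_nonpos hderiv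
    (fun x hx => div_nonpos_of_nonpos_of_nonneg
      (by linarith [one_sub_sq_mul_logQuot_sq_add_le hx.1.le hx.2])
      (one_sub_sq_pos_of_mem_Ioo ⟨by linarith [hx.1], hx.2⟩).le)
    ⟨le_rfl, one_pos⟩ ⟨ht₀, ht₁⟩ ht₀
  simpa using h

theorem stmt11 (t : ℝ) (ht : t ∈ Set.Ioo (0 : ℝ) 1) :
    ((Real.log (1 + t) - Real.log (1 - t)) / (2 * t)) *
        ((1 + t) * Real.log (1 + t) + (1 - t) * Real.log (1 - t)) +
      Real.log (1 + t) + Real.log (1 - t) ≤ 0 := by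
  obtain ⟨ht₀, ht₁⟩ := ht
  have key : ((log (1 + t) - log (1 - t)) / (2 * t)) *
        ((1 + t) * log (1 + t) + (1 - t) * log (1 - t)) + log (1 + t) + log (1 - t) =
      (t * logQuot t ^ 2 + logProd t * (logQuot t + 2 * t)) / (2 * t) := by
    unfold logQuot logProd
    field_simp
    ring
  rw [key]
  exact div_nonpos_of_nonpos_of_nonneg (mul_logQuot_sq_add_logProd_mul_nonpos ht₀.le ht₁)
    (by positivity)
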